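/- arXiv:2207.11747 — 2 statements merged into one kernel-verified Lean document; each statement's English description precedes it below -/
import Mathlib

section
/- Let A be an n×n slack matrix of a pointed full-dimensional polyhedral cone in R^d with A = X X^T, X ∈ R^{n×d}, rank(X) = d. Define W₁ = {X Q X^T : Q ∈ S^d} and W₂ = {Y ∈ S^n : Y_{ij} = 0 whenever A_{ij} = 0}. Then every B ∈ W₁ ∩ W₂ has each row a scalar multiple of the corresponding row of A. -/
open Matrix Pointwise

/-- The Euclidean dual cone of `K ⊆ ℝ^d`. -/
def eucDual {d : ℕ} (K : Set (Fin d → ℝ)) : Set (Fin d → ℝ) :=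
  {y | ∀ x ∈ K, 0 ≤ x ⬝ᵥ y}

/-- A polyhedral cone: nonnegative combinations of finitely many vectors. -/
def IsPolyhedralCone {d : ℕ} (K : Set (Fin d → ℝ)) : Prop :=
  ∃ (n : ℕ) (v : Fin n → (Fin d → ℝ)),
    K = {x | ∃ c : Fin n → ℝ, (∀ i, 0 ≤ c i) ∧ x = ∑ i, c i • v i}

/-- The convex cone generated by the vectors `v 0, …, v (n-1)`. -/
def coneGenBy {n : ℕ} {V : Type*} [AddCommMonoid V] [Module ℝ V] (v : Fin n → V) : Set V :=
  {x | ∃ c : Fin n → ℝ, (∀ i, 0 ≤ c i) ∧ x = ∑ i, c i • v i}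

/-- `r` generates an extreme ray of the cone `K`. -/
def IsExtremeRayGen {d : ℕ} (K : Set (Fin d → ℝ)) (r : Fin d → ℝ) : Prop :=
  r ≠ 0 ∧ r ∈ K ∧
    ∀ x ∈ K, ∀ y ∈ K, (∃ c : ℝ, 0 ≤ c ∧ x + y = c • r) →
      (∃ a : ℝ, 0 ≤ a ∧ x = a • r) ∧ (∃ b : ℝ, 0 ≤ b ∧ y = b • r)

/-- The family `v` consists of generators of the distinct extreme rays of `K`,
one generator per extreme ray, covering all extreme rays of `K`. -/
def GensDistinctExtremeRays {d n : ℕ} (K : Set (Fin d → ℝ))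
    (v : Fin n → (Fin d → ℝ)) : Prop :=
  (∀ i, IsExtremeRayGen K (v i)) ∧
  (∀ i j, i ≠ j → ∀ c : ℝ, v i ≠ c • v j) ∧
  (∀ r, IsExtremeRayGen K r → ∃ i, ∃ c : ℝ, 0 < c ∧ r = c • v i)

/-- `M` is a slack matrix of the cone `K`: `M i j = ⟨x i, y j⟩` where the `x i`
generate the distinct extreme rays of `K` and the `y j` generate the distinct
extreme rays of the (Euclidean) dual cone of `K`. -/
def IsSlackMatrix {d n m : ℕ} (M : Matrix (Fin n) (Fin m) ℝ)
    (K : Set (Fin d → ℝ)) : Prop :=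
  ∃ (x : Fin n → (Fin d → ℝ)) (y : Fin m → (Fin d → ℝ)),
    GensDistinctExtremeRays K x ∧ GensDistinctExtremeRays (eucDual K) y ∧
    ∀ i j, M i j = x i ⬝ᵥ y j

/-!
Row `i` of `B = X Q Xᵀ` equals `c ᵥ* A` for some `c`, because `X` has full column rank, so it
suffices to show that a vector `w = c ᵥ* M` in the row space of a slack matrix `M i j = x i ⬝ᵥ y j`
that vanishes wherever row `i` does is a multiple of row `i`. Put `ζ = ∑ a, c a • x a`, so that
`w j = ζ ⬝ᵥ y j`. For small `ε > 0` both `x i ± ε • ζ` pair nonnegatively with every `y j`, hence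
lie in `K`: the `y j` generate the dual cone (Minkowski; the dual of a full-dimensional cone is
pointed) and a finitely generated cone is its own double dual (Farkas). As `x i` spans an extreme
ray of `K`, `ζ` is a multiple of `x i`.
-/

section Cones

variable {d m : ℕ}

theorem zero_mem_coneGenBy (v : Fin m → Fin d → ℝ) : 0 ∈ coneGenBy v :=
  ⟨0, fun _ => le_rfl, by simp⟩

theorem mem_coneGenBy_self (v : Fin m → Fin d → ℝ) (a : Fin m) : v a ∈ coneGenBy v :=
  ⟨Pi.single a 1, fun b => by by_cases h : b = a <;> simp [h], by simp [Pi.single_apply]⟩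

theorem add_mem_coneGenBy {v : Fin m → Fin d → ℝ} {x x' : Fin d → ℝ}
    (hx : x ∈ coneGenBy v) (hx' : x' ∈ coneGenBy v) : x + x' ∈ coneGenBy v := by
  obtain ⟨c, hc, rfl⟩ := hx
  obtain ⟨c', hc', rfl⟩ := hx'
  exact ⟨c + c', fun a => add_nonneg (hc a) (hc' a), by simp [add_smul, Finset.sum_add_distrib]⟩

theorem smul_mem_coneGenBy {v : Fin m → Fin d → ℝ} {x : Fin d → ℝ} {t : ℝ} (ht : 0 ≤ t)
    (hx : x ∈ coneGenBy v) : t • x ∈ coneGenBy v := by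
  obtain ⟨c, hc, rfl⟩ := hx
  exact ⟨t • c, fun a => mul_nonneg ht (hc a), by simp [Finset.smul_sum, smul_smul]⟩

theorem mem_coneGenBy_of_sub_smul_last {v : Fin (m + 1) → Fin d → ℝ} {x : Fin d → ℝ} {t : ℝ}
    (ht : 0 ≤ t) (hx : x - t • v (Fin.last m) ∈ coneGenBy fun a => v a.castSucc) :
    x ∈ coneGenBy v := by
  obtain ⟨c, hc, hxc⟩ := hx
  refine ⟨Fin.snoc c t, Fin.lastCases (by simpa) (by simpa), ?_⟩
  simp [Fin.sum_univ_castSucc, ← hxc]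

theorem mem_eucDual_coneGenBy {v : Fin m → Fin d → ℝ} {w : Fin d → ℝ} :
    w ∈ eucDual (coneGenBy v) ↔ ∀ a, 0 ≤ v a ⬝ᵥ w := by
  refine ⟨fun hw a => hw _ (mem_coneGenBy_self v a), ?_⟩
  rintro hw _ ⟨c, hc, rfl⟩
  rw [sum_dotProduct]
  exact Finset.sum_nonneg fun a _ => by rw [smul_dotProduct]; exact mul_nonneg (hc a) (hw a)

theorem eq_zero_of_mem_eucDual_of_neg_mem {K : Set (Fin d → ℝ)}
    (hK : Submodule.span ℝ K = ⊤) {w : Fin d → ℝ} (hw : w ∈ eucDual K) (hw' : -w ∈ eucDual K) :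
    w = 0 := by
  have hspan : Submodule.span ℝ K ≤ LinearMap.ker (dotProductBilin ℝ ℝ w) :=
    Submodule.span_le.2 fun x hx => le_antisymm
      (by simpa [dotProduct_comm] using hw' x hx) (by simpa [dotProduct_comm] using hw x hx)
  rw [hK] at hspan
  exact dotProduct_self_eq_zero.1 (hspan Submodule.mem_top)

theorem add_mem_eucDual {K : Set (Fin d → ℝ)} {x y : Fin d → ℝ} (hx : x ∈ eucDual K)
    (hy : y ∈ eucDual K) : x + y ∈ eucDual K :=
  fun u hu => by rw [dotProduct_add]; exact add_nonneg (hx u hu) (hy u hu)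

theorem smul_mem_eucDual {K : Set (Fin d → ℝ)} {x : Fin d → ℝ} {t : ℝ} (ht : 0 ≤ t)
    (hx : x ∈ eucDual K) : t • x ∈ eucDual K :=
  fun u hu => by rw [dotProduct_smul]; exact mul_nonneg ht (hx u hu)

theorem nonneg_of_smul_mem_eucDual {K : Set (Fin d → ℝ)}
    (hpt : ∀ w ∈ eucDual K, -w ∈ eucDual K → w = 0) {w : Fin d → ℝ} (hw : w ∈ eucDual K)
    (hw0 : w ≠ 0) {t : ℝ} (ht : t • w ∈ eucDual K) : 0 ≤ t := by
  by_contra! htneg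
  refine hw0 (hpt w hw fun u hu => ?_)
  have := ht u hu
  rw [dotProduct_smul, smul_eq_mul] at this
  rw [dotProduct_neg]
  nlinarith

end Cones

section Farkas

variable {d : ℕ}

/-- The projection of `p` along `L` onto the hyperplane `y ⬝ᵥ · = 0` (when `L ⬝ᵥ y ≠ 0`). -/
noncomputable def projAlong (L y p : Fin d → ℝ) : Fin d → ℝ :=
  p - (p ⬝ᵥ y / (L ⬝ᵥ y)) • L

theorem projAlong_self {L y : Fin d → ℝ} (h : L ⬝ᵥ y ≠ 0) : projAlong L y L = 0 := by
  rw [projAlong, div_self h, one_smul, sub_self]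

theorem dotProduct_projAlong_comm (L y p w : Fin d → ℝ) :
    p ⬝ᵥ projAlong y L w = projAlong L y p ⬝ᵥ w := by
  simp only [projAlong, dotProduct_sub, sub_dotProduct, dotProduct_smul, smul_dotProduct,
    smul_eq_mul, dotProduct_comm L w, dotProduct_comm y L]
  ring

theorem mem_coneGenBy_of_projAlong_mem {m : ℕ} {v : Fin (m + 1) → Fin d → ℝ} {x y : Fin d → ℝ}
    (hy : ∀ a : Fin m, 0 ≤ v a.castSucc ⬝ᵥ y) (hL : v (Fin.last m) ⬝ᵥ y < 0) (hxy : x ⬝ᵥ y < 0)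
    (hproj : projAlong (v (Fin.last m)) y x ∈
      coneGenBy fun a => projAlong (v (Fin.last m)) y (v a.castSucc)) :
    x ∈ coneGenBy v := by
  set L := v (Fin.last m)
  obtain ⟨c, hc, hxc⟩ := hproj
  set t := x ⬝ᵥ y / (L ⬝ᵥ y) - ∑ a, c a * (v a.castSucc ⬝ᵥ y / (L ⬝ᵥ y))
  have ht : 0 ≤ t := by
    have hsum : ∑ a, c a * (v a.castSucc ⬝ᵥ y / (L ⬝ᵥ y)) ≤ 0 :=
      Finset.sum_nonpos fun a _ => mul_nonpos_of_nonneg_of_nonpos (hc a)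
        (div_nonpos_of_nonneg_of_nonpos (hy a) hL.le)
    linarith [div_pos_of_neg_of_neg hxy hL]
  refine mem_coneGenBy_of_sub_smul_last ht ⟨c, hc, ?_⟩
  rw [projAlong, sub_eq_iff_eq_add] at hxc
  simp only [projAlong, smul_sub, Finset.sum_sub_distrib, smul_smul, ← Finset.sum_smul] at hxc
  rw [hxc]
  module

theorem exists_dotProduct_neg_of_notMem_coneGenBy :
    ∀ {m : ℕ} (v : Fin m → Fin d → ℝ) {x : Fin d → ℝ}, x ∉ coneGenBy v →
      ∃ y ∈ eucDual (coneGenBy v), x ⬝ᵥ y < 0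
  | 0, v, x, hx => by
    have hx0 : x ≠ 0 := by rintro rfl; exact hx (zero_mem_coneGenBy v)
    refine ⟨-x, mem_eucDual_coneGenBy.2 fun a => a.elim0, ?_⟩
    simpa using dotProduct_self_star_pos_iff.2 hx0
  | m + 1, v, x, hx => by
    obtain ⟨y, hy, hxy⟩ := exists_dotProduct_neg_of_notMem_coneGenBy (fun a => v a.castSucc)
      (x := x) fun h => hx (mem_coneGenBy_of_sub_smul_last le_rfl (by simpa using h))
    rw [mem_eucDual_coneGenBy] at hy
    set L := v (Fin.last m)
    by_cases hL : 0 ≤ L ⬝ᵥ y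
    · exact ⟨y, mem_eucDual_coneGenBy.2 (Fin.lastCases hL hy), hxy⟩
    replace hL := not_le.1 hL
    -- Separate again after projecting everything along `L` onto `yᗮ`.
    obtain ⟨w, hw, hxw⟩ := exists_dotProduct_neg_of_notMem_coneGenBy
      (fun a => projAlong L y (v a.castSucc)) (x := projAlong L y x)
      fun h => hx (mem_coneGenBy_of_projAlong_mem hy hL hxy h)
    rw [mem_eucDual_coneGenBy] at hw
    refine ⟨projAlong y L w, mem_eucDual_coneGenBy.2 (Fin.lastCases ?last ?cast), ?neg⟩
    case last => rw [dotProduct_projAlong_comm, projAlong_self hL.ne, zero_dotProduct]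
    case cast => intro a; rw [dotProduct_projAlong_comm]; exact hw a
    case neg => rwa [dotProduct_projAlong_comm]

theorem mem_coneGenBy_of_mem_eucDual_eucDual {m : ℕ} (v : Fin m → Fin d → ℝ) {x : Fin d → ℝ}
    (hx : x ∈ eucDual (eucDual (coneGenBy v))) : x ∈ coneGenBy v := by
  by_contra h
  obtain ⟨y, hy, hxy⟩ := exists_dotProduct_neg_of_notMem_coneGenBy v h
  exact (hx y hy).not_gt (by rwa [dotProduct_comm])

end Farkas

section Minkowski

variable {d m : ℕ}

noncomputable def slackSet (v : Fin m → Fin d → ℝ) (w : Fin d → ℝ) : Finset (Fin m) :=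
  {a | 0 < v a ⬝ᵥ w}

variable {v : Fin m → Fin d → ℝ}

theorem card_slackSet_lt {u w : Fin d → ℝ} (hw : w ∈ eucDual (coneGenBy v))
    (hface : ∀ a, v a ⬝ᵥ w = 0 → v a ⬝ᵥ u = 0) {a : Fin m} (ha : 0 < v a ⬝ᵥ w)
    (hau : v a ⬝ᵥ u = 0) : (slackSet v u).card < (slackSet v w).card := by
  have hsub : slackSet v u ⊆ slackSet v w := fun b hb => by
    simp only [slackSet, Finset.mem_filter, Finset.mem_univ, true_and] at hb ⊢
    exact (mem_eucDual_coneGenBy.1 hw b).lt_of_ne fun h => hb.ne' (hface b h.symm)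
  refine Finset.card_lt_card ((Finset.ssubset_iff_of_subset hsub).2 ⟨a, ?_, ?_⟩) <;>
    simp [slackSet, ha, hau]

theorem exists_nonpos_add_smul_mem_eucDual {p q : Fin d → ℝ} (hp : p ∈ eucDual (coneGenBy v))
    (hq : ∃ a, 0 < v a ⬝ᵥ q) :
    ∃ t : ℝ, t ≤ 0 ∧ p + t • q ∈ eucDual (coneGenBy v) ∧
      ∃ a, 0 < v a ⬝ᵥ q ∧ v a ⬝ᵥ (p + t • q) = 0 := by
  classical
  rw [mem_eucDual_coneGenBy] at hp
  obtain ⟨a₀, ha₀⟩ := hq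
  obtain ⟨a, haS, hmax⟩ := Finset.exists_max_image {a | 0 < v a ⬝ᵥ q}
    (fun a => -(v a ⬝ᵥ p) / (v a ⬝ᵥ q)) ⟨a₀, by simpa using ha₀⟩
  simp only [Finset.mem_filter, Finset.mem_univ, true_and] at haS hmax
  set t := -(v a ⬝ᵥ p) / (v a ⬝ᵥ q)
  have ht : t ≤ 0 := div_nonpos_of_nonpos_of_nonneg (neg_nonpos.2 (hp a)) haS.le
  refine ⟨t, ht, mem_eucDual_coneGenBy.2 fun b => ?_, a, haS, ?_⟩
  · rw [dotProduct_add, dotProduct_smul, smul_eq_mul]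
    rcases le_or_gt (v b ⬝ᵥ q) 0 with hb | hb
    · nlinarith [hp b]
    · linarith [(div_le_iff₀ hb).1 (hmax b hb)]
  · rw [dotProduct_add, dotProduct_smul, smul_eq_mul, div_mul_cancel₀ _ haS.ne', add_neg_cancel]

theorem isExtremeRayGen_of_forall_eq_smul
    (hpt : ∀ w ∈ eucDual (coneGenBy v), -w ∈ eucDual (coneGenBy v) → w = 0) {w : Fin d → ℝ}
    (hw : w ∈ eucDual (coneGenBy v)) (hw0 : w ≠ 0)
    (hface : ∀ u ∈ eucDual (coneGenBy v), (∀ a, v a ⬝ᵥ w = 0 → v a ⬝ᵥ u = 0) →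
      ∃ t : ℝ, u = t • w) :
    IsExtremeRayGen (eucDual (coneGenBy v)) w := by
  refine ⟨hw0, hw, fun p hp q hq ⟨c, _, hpq⟩ => ?_⟩
  have htight : ∀ a, v a ⬝ᵥ w = 0 → v a ⬝ᵥ p = 0 ∧ v a ⬝ᵥ q = 0 := by
    intro a ha
    have hsum : v a ⬝ᵥ p + v a ⬝ᵥ q = 0 := by
      rw [← dotProduct_add, hpq, dotProduct_smul, ha, smul_zero]
    have := mem_eucDual_coneGenBy.1 hp a
    have := mem_eucDual_coneGenBy.1 hq a
    constructor <;> linarith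
  obtain ⟨t, rfl⟩ := hface p hp fun a ha => (htight a ha).1
  obtain ⟨s, rfl⟩ := hface q hq fun a ha => (htight a ha).2
  exact ⟨⟨t, nonneg_of_smul_mem_eucDual hpt hw hw0 hp, rfl⟩,
    ⟨s, nonneg_of_smul_mem_eucDual hpt hw hw0 hq, rfl⟩⟩

/-- Push `w` along `-z` and `z` along `-w` until a new constraint becomes tight. -/
theorem exists_eq_smul_add_smul_card_slackSet_lt
    (hpt : ∀ w ∈ eucDual (coneGenBy v), -w ∈ eucDual (coneGenBy v) → w = 0) {w z : Fin d → ℝ}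
    (hw : w ∈ eucDual (coneGenBy v)) (hw0 : w ≠ 0) (hz : z ∈ eucDual (coneGenBy v))
    (hzw : ∀ a, v a ⬝ᵥ w = 0 → v a ⬝ᵥ z = 0) (hznot : ∀ t : ℝ, z ≠ t • w) :
    ∃ p ∈ eucDual (coneGenBy v), (slackSet v p).card < (slackSet v w).card ∧
      ∃ q ∈ eucDual (coneGenBy v), (slackSet v q).card < (slackSet v w).card ∧
        ∃ a b : ℝ, 0 ≤ a ∧ 0 ≤ b ∧ w = a • p + b • q := by
  have hpos : ∀ u ∈ eucDual (coneGenBy v), u ≠ 0 → ∃ a, 0 < v a ⬝ᵥ u := fun u hu hu0 => by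
    by_contra! h
    exact hu0 (hpt u hu (mem_eucDual_coneGenBy.2 fun a => by simpa using h a))
  obtain ⟨t, ht, hp, a, haz, hap⟩ :=
    exists_nonpos_add_smul_mem_eucDual hw (hpos z hz fun h => hznot 0 (by simp [h]))
  obtain ⟨s, hs, hq, b, hbw, hbq⟩ := exists_nonpos_add_smul_mem_eucDual hz (hpos w hw hw0)
  have haw : 0 < v a ⬝ᵥ w :=
    (mem_eucDual_coneGenBy.1 hw a).lt_of_ne fun h => haz.ne' (hzw a h.symm)
  have hsum : (1 - t * s) • w = (w + t • z) + (-t) • (z + s • w) := by module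
  have hβ : 0 < 1 - t * s := by
    refine (nonneg_of_smul_mem_eucDual hpt hw hw0 (hsum ▸ add_mem_eucDual hp
      (smul_mem_eucDual (neg_nonneg.2 ht) hq))).lt_of_ne fun h0 => ?_
    rw [← h0, zero_smul] at hsum
    have hp0 : w + t • z = 0 := hpt _ hp (by
      rw [neg_eq_of_add_eq_zero_right hsum.symm]; exact smul_mem_eucDual (neg_nonneg.2 ht) hq)
    have ht0 : -t ≠ 0 := fun h => hw0 (by simpa [neg_eq_zero.1 h] using hp0)
    exact hznot (-t)⁻¹ (by rw [eq_neg_of_add_eq_zero_left hp0, ← neg_smul, inv_smul_smul₀ ht0])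
  refine ⟨_, hp, card_slackSet_lt hw (fun c hc => ?_) haw hap,
    _, hq, card_slackSet_lt hw (fun c hc => ?_) hbw hbq,
    (1 - t * s)⁻¹, (1 - t * s)⁻¹ * -t, inv_nonneg.2 hβ.le,
    mul_nonneg (inv_nonneg.2 hβ.le) (neg_nonneg.2 ht), ?_⟩
  · simp [dotProduct_add, dotProduct_smul, hc, hzw c hc]
  · simp [dotProduct_add, dotProduct_smul, hc, hzw c hc]
  · rw [mul_smul, ← smul_add, ← hsum, inv_smul_smul₀ hβ.ne']

theorem mem_coneGenBy_of_mem_eucDual {n : ℕ} {y : Fin n → Fin d → ℝ}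
    (hpt : ∀ w ∈ eucDual (coneGenBy v), -w ∈ eucDual (coneGenBy v) → w = 0)
    (hcov : ∀ r, IsExtremeRayGen (eucDual (coneGenBy v)) r → ∃ j, ∃ c : ℝ, 0 < c ∧ r = c • y j)
    {w : Fin d → ℝ} (hw : w ∈ eucDual (coneGenBy v)) : w ∈ coneGenBy y := by
  induction hk : (slackSet v w).card using Nat.strong_induction_on generalizing w with
  | _ k ih =>
  by_cases hw0 : w = 0
  · exact hw0 ▸ zero_mem_coneGenBy y
  by_cases hface : ∀ u ∈ eucDual (coneGenBy v), (∀ a, v a ⬝ᵥ w = 0 → v a ⬝ᵥ u = 0) →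
      ∃ t : ℝ, u = t • w
  · obtain ⟨j, c, hc, rfl⟩ := hcov w (isExtremeRayGen_of_forall_eq_smul hpt hw hw0 hface)
    exact smul_mem_coneGenBy hc.le (mem_coneGenBy_self y j)
  push Not at hface
  obtain ⟨z, hz, hzw, hznot⟩ := hface
  obtain ⟨p, hp, hpk, q, hq, hqk, a, b, ha, hb, rfl⟩ :=
    exists_eq_smul_add_smul_card_slackSet_lt hpt hw hw0 hz hzw hznot
  exact add_mem_coneGenBy (smul_mem_coneGenBy ha (ih _ (hk ▸ hpk) hp rfl))
    (smul_mem_coneGenBy hb (ih _ (hk ▸ hqk) hq rfl))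

end Minkowski

theorem eucDual_coneGenBy_subset_coneGenBy {d m n : ℕ} (v : Fin m → Fin d → ℝ)
    {y : Fin n → Fin d → ℝ} (hfull : Submodule.span ℝ (coneGenBy v) = ⊤)
    (hcov : ∀ r, IsExtremeRayGen (eucDual (coneGenBy v)) r → ∃ j, ∃ c : ℝ, 0 < c ∧ r = c • y j) :
    eucDual (coneGenBy y) ⊆ coneGenBy v := fun _ hu =>
  mem_coneGenBy_of_mem_eucDual_eucDual v fun w hw =>
    hu w (mem_coneGenBy_of_mem_eucDual (fun _ => eq_zero_of_mem_eucDual_of_neg_mem hfull) hcov hw)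

open Filter Topology in
theorem exists_pos_mul_abs_le {ι : Type*} [Finite ι] {g h : ι → ℝ} (hg : ∀ j, 0 ≤ g j)
    (hgh : ∀ j, g j = 0 → h j = 0) : ∃ ε > 0, ∀ j, ε * |h j| ≤ g j := by
  have hev : ∀ᶠ ε in 𝓝[>] (0 : ℝ), ∀ j, ε * |h j| ≤ g j := by
    refine eventually_all.2 fun j => ?_
    rcases (hg j).eq_or_lt with h0 | hpos
    · exact .of_forall fun ε => by simp [hgh j h0.symm, ← h0]
    · have hlim : Tendsto (fun ε : ℝ => ε * |h j|) (𝓝[>] 0) (𝓝 0) :=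
        ((continuous_mul_const _).tendsto' 0 0 (zero_mul _)).mono_left nhdsWithin_le_nhds
      exact hlim.eventually (eventually_le_nhds hpos)
  exact (hev.and self_mem_nhdsWithin).exists.imp fun ε h => ⟨h.2, h.1⟩

theorem IsSlackMatrix.exists_vecMul_eq_smul_row {d n m : ℕ} {M : Matrix (Fin n) (Fin m) ℝ}
    {K : Set (Fin d → ℝ)} (hM : IsSlackMatrix M K) (hK : IsPolyhedralCone K)
    (hfull : Submodule.span ℝ K = ⊤) (c : Fin n → ℝ) (i : Fin n)
    (hzero : ∀ j, M i j = 0 → (c ᵥ* M) j = 0) : ∃ μ : ℝ, c ᵥ* M = μ • M i := by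
  obtain ⟨x, y, hx, hy, hxy⟩ := hM
  obtain ⟨k, v, rfl⟩ := hK
  set ζ := ∑ a, c a • x a
  have hζ : ∀ j, (c ᵥ* M) j = ζ ⬝ᵥ y j := fun j => by
    rw [vecMul_eq_sum, Finset.sum_apply, sum_dotProduct]
    simp only [Pi.smul_apply, smul_dotProduct, hxy]
  obtain ⟨ε, hε, hεle⟩ := exists_pos_mul_abs_le (h := fun j => ζ ⬝ᵥ y j)
    (fun j => (hy.1 j).2.1 _ (hx.1 i).2.1)
    fun j h => by rw [← hζ]; exact hzero j ((hxy i j).trans h)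
  have hmem : ∀ s : ℝ, |s| ≤ ε → x i + s • ζ ∈ coneGenBy v := fun s hs =>
    eucDual_coneGenBy_subset_coneGenBy v hfull hy.2.2 <| mem_eucDual_coneGenBy.2 fun j => by
      have hprod : |s| * |ζ ⬝ᵥ y j| ≤ ε * |ζ ⬝ᵥ y j| :=
        mul_le_mul_of_nonneg_right hs (abs_nonneg _)
      rw [dotProduct_comm, add_dotProduct, smul_dotProduct, smul_eq_mul]
      linarith [neg_abs_le (s * (ζ ⬝ᵥ y j)), abs_mul s (ζ ⬝ᵥ y j), hεle j]
  obtain ⟨⟨a, -, ha⟩, -⟩ := (hx.1 i).2.2 _ (hmem ε (abs_of_pos hε).le) _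
    (hmem (-ε) (by rw [abs_neg, abs_of_pos hε])) ⟨2, zero_le_two, by module⟩
  have hζx : ζ = ((a - 1) / ε) • x i := by
    rw [div_eq_inv_mul, mul_smul, sub_smul, one_smul, ← ha, add_sub_cancel_left,
      inv_smul_smul₀ hε.ne']
  exact ⟨(a - 1) / ε, funext fun j => by
    rw [hζ, hζx, Pi.smul_apply, hxy, smul_dotProduct]⟩

theorem Matrix.vecMul_surjective_of_rank_eq {m n R : Type*} [Field R] [Fintype m] [Fintype n]
    {X : Matrix m n R} (h : X.rank = Fintype.card n) : Function.Surjective fun c => c ᵥ* X := by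
  have hrange : LinearMap.range Xᵀ.mulVecLin = ⊤ := Submodule.eq_top_of_finrank_eq <| by
    rw [Module.finrank_fintype_fun_eq_card]; exact (rank_transpose X).trans h
  intro z
  obtain ⟨c, hc⟩ : z ∈ LinearMap.range Xᵀ.mulVecLin := hrange ▸ Submodule.mem_top
  exact ⟨c, (mulVec_transpose X c).symm.trans hc⟩

theorem rows_multiple_of_mem_W1_inter_W2_general
    {d n : ℕ} (K : Set (Fin d → ℝ))
    (hpoly : IsPolyhedralCone K)
    (hfull : Submodule.span ℝ K = ⊤)
    (A : Matrix (Fin n) (Fin n) ℝ) (hslack : IsSlackMatrix A K)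
    (X : Matrix (Fin n) (Fin d) ℝ) (hfact : A = X * Xᵀ) (hXrank : X.rank = d)
    (B : Matrix (Fin n) (Fin n) ℝ)
    (hW1 : ∃ Q : Matrix (Fin d) (Fin d) ℝ, Q.IsSymm ∧ B = X * Q * Xᵀ)
    (hW2 : ∀ i j, A i j = 0 → B i j = 0) :
    ∀ i, ∃ lam : ℝ, B i = lam • A i := by
  obtain ⟨Q, -, rfl⟩ := hW1
  intro i
  obtain ⟨c, hc⟩ : ∃ c, c ᵥ* X = X i ᵥ* Q :=
    Matrix.vecMul_surjective_of_rank_eq (by simpa using hXrank) _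
  have hrow : (X * Q * Xᵀ) i = c ᵥ* A := by
    rw [hfact, mul_apply_eq_vecMul, mul_apply_eq_vecMul, ← hc, vecMul_vecMul]
  rw [hrow]
  exact hslack.exists_vecMul_eq_smul_row hpoly hfull c i fun j hj => hrow ▸ hW2 i j hj

/-- Let `A = X Xᵀ` (with `rank X = d`) be an `n×n` slack matrix of a
pointed full-dimensional polyhedral cone in `ℝ^d`. If a symmetric matrix `B` lies in
`W₁ = {X Q Xᵀ : Q ∈ 𝒮^d}` and in `W₂ = {Y ∈ 𝒮^n : Y i j = 0 whenever A i j = 0}`, then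
every row of `B` is a scalar multiple of the corresponding row of `A`. -/
theorem rows_multiple_of_mem_W1_inter_W2
    {d n : ℕ} (K : Set (Fin d → ℝ))
    (hpoly : IsPolyhedralCone K) (hpointed : K ∩ (-K) = {0})
    (hfull : Submodule.span ℝ K = ⊤)
    (A : Matrix (Fin n) (Fin n) ℝ) (hslack : IsSlackMatrix A K)
    (X : Matrix (Fin n) (Fin d) ℝ) (hfact : A = X * Xᵀ) (hXrank : X.rank = d)
    (B : Matrix (Fin n) (Fin n) ℝ) (hBsymm : B.IsSymm)
    (hW1 : ∃ Q : Matrix (Fin d) (Fin d) ℝ, Q.IsSymm ∧ B = X * Q * Xᵀ)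
    (hW2 : ∀ i j, A i j = 0 → B i j = 0) :
    ∀ i, ∃ lam : ℝ, B i = lam • A i :=
  rows_multiple_of_mem_W1_inter_W2_general K hpoly hfull A hslack X hfact hXrank B hW1 hW2
end

section
/- Let S be a positive semidefinite slack matrix of a self-dual polyhedral cone K ⊆ R^d, and suppose S is completely positive semidefinite, witnessed by PSD matrices A₁,...,Aₙ ∈ S^k_+ with S_{ij} = ⟨A_i, A_j⟩ (Frobenius inner product). Let K̄ be the convex cone generated by A₁,...,Aₙ and H their span. Then K̄ is linearly isomorphic to K, K̄ is self-dual on its span with respect to the Frobenius inner product, and K̄ = S^k_+ ∩ H. -/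
open Matrix Pointwise

/-!
Write `X`, `Y`, `Ā` for the linear maps sending a coefficient vector `λ ∈ ℝⁿ` to `∑ λᵢ xᵢ`,
`∑ λᵢ yᵢ` and `∑ λᵢ Aᵢ`, where the `xᵢ` and `yᵢ` generate the extreme rays of `K` and of its
dual `K*`. The two descriptions of `S` say `Xλ ⬝ Yμ = tr (Āλ Āμ)`. Self-duality makes `K` and
`K*` pointed and full-dimensional, so both are generated by their extreme rays (Krein–Milman on
a compact slice of the cone) and `X`, `Y` are onto. The identity then forces
`ker X = ker Ā = ker Y`, using `tr (M M) = 0 → M = 0` for symmetric `M`, so `Φ = Ā ∘ X⁻¹` is a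
well-defined injective linear map with `Φ K = K̄`. If `Z = Āλ ∈ H` pairs nonnegatively with every
`Aᵢ`, then `Yλ` pairs nonnegatively with every `xᵢ`, so `Yλ ∈ K* = Y ℝⁿ₊`, and `ker Y = ker Ā`
puts `Z` in `K̄`. With `tr (A B) ≥ 0` for PSD `A`, `B` this gives both descriptions of `K̄`.
-/

section Cone

variable {n : ℕ} {E F : Type*} [AddCommGroup E] [Module ℝ E] [AddCommGroup F] [Module ℝ F]
  {v : Fin n → E}

theorem coneGenBy_eq_hull (v : Fin n → E) :
    coneGenBy v = PointedCone.hull ℝ (Set.range v) := by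
  ext z
  simp only [coneGenBy, Set.mem_ofPred_eq, SetLike.mem_coe, Submodule.mem_span_range_iff_exists_fun]
  constructor
  · rintro ⟨c, hc, rfl⟩
    exact ⟨fun i => ⟨c i, hc i⟩, rfl⟩
  · rintro ⟨c, rfl⟩
    exact ⟨fun i => c i, fun i => (c i).2, rfl⟩

theorem zero_mem_coneGenBy_s17 : (0 : E) ∈ coneGenBy v := by
  rw [coneGenBy_eq_hull]
  exact zero_mem _

theorem apply_mem_coneGenBy (i : Fin n) : v i ∈ coneGenBy v := by
  rw [coneGenBy_eq_hull]
  exact PointedCone.subset_hull (Set.mem_range_self i)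

theorem smul_mem_coneGenBy_s17 {t : ℝ} (ht : 0 ≤ t) {z : E} (hz : z ∈ coneGenBy v) :
    t • z ∈ coneGenBy v := by
  rw [coneGenBy_eq_hull] at hz ⊢
  exact PointedCone.smul_mem _ ht hz

theorem convex_coneGenBy : Convex ℝ (coneGenBy v) := by
  rw [coneGenBy_eq_hull]
  exact PointedCone.convex _

theorem coneGenBy_subset_of_forall_mem {m : ℕ} {u : Fin m → E} (h : ∀ i, u i ∈ coneGenBy v) :
    coneGenBy u ⊆ coneGenBy v := by
  simp only [coneGenBy_eq_hull] at h ⊢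
  exact Submodule.span_le.2 (Set.range_subset_iff.2 h)

theorem coneGenBy_subset_span : coneGenBy v ⊆ Submodule.span ℝ (Set.range v) := by
  rw [coneGenBy_eq_hull]
  exact PointedCone.hull_le_span ℝ _

theorem LinearMap.image_coneGenBy (f : E →ₗ[ℝ] F) : f '' coneGenBy v = coneGenBy (f ∘ v) := by
  rw [coneGenBy_eq_hull, coneGenBy_eq_hull, ← PointedCone.coe_map, PointedCone.map,
    Submodule.map_span, Set.range_comp]
  rfl

theorem coneGenBy_eq_image_linearCombination (v : Fin n → E) :
    coneGenBy v = Fintype.linearCombination ℝ v '' Set.Ici 0 := by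
  ext z
  simp only [Set.mem_image, Set.mem_Ici, Pi.le_def, Pi.zero_apply,
    Fintype.linearCombination_apply]
  exact ⟨fun ⟨c, hc, h⟩ => ⟨c, hc, h.symm⟩, fun ⟨c, hc, h⟩ => ⟨c, hc, h.symm⟩⟩

theorem LinearMap.image_coneGenBy_of_comp_eq {w : Fin n → F} {f : E →ₗ[ℝ] F}
    (h : f ∘ₗ Fintype.linearCombination ℝ v = Fintype.linearCombination ℝ w) :
    f '' coneGenBy v = coneGenBy w := by
  rw [coneGenBy_eq_image_linearCombination, coneGenBy_eq_image_linearCombination, Set.image_image,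
    ← h]
  rfl

end Cone

section Minkowski

variable {m n : ℕ} {E : Type*} [AddCommGroup E] [Module ℝ E] {v : Fin m → E} {f : E →ₗ[ℝ] ℝ}

def coneSlice (v : Fin m → E) (f : E →ₗ[ℝ] ℝ) : Set E := {z ∈ coneGenBy v | f z = 1}

theorem inv_smul_mem_coneSlice (hf : ∀ z ∈ coneGenBy v, z ≠ 0 → 0 < f z) {z : E}
    (hz : z ∈ coneGenBy v) (hz0 : z ≠ 0) : (f z)⁻¹ • z ∈ coneSlice v f := by
  have hfz := hf z hz hz0
  refine ⟨smul_mem_coneGenBy_s17 (inv_nonneg.2 hfz.le) hz, ?_⟩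
  rw [map_smul, smul_eq_mul, inv_mul_cancel₀ hfz.ne']

theorem convex_coneSlice : Convex ℝ (coneSlice v f) :=
  convex_coneGenBy.inter (convex_hyperplane f.isLinear 1)

theorem coneSlice_eq_convexHull (hf : ∀ z ∈ coneGenBy v, z ≠ 0 → 0 < f z) :
    coneSlice v f = convexHull ℝ ((fun i => (f (v i))⁻¹ • v i) '' {i | v i ≠ 0}) := by
  refine (convexHull_min ?_ convex_coneSlice).antisymm' ?_
  · rintro - ⟨i, hi, rfl⟩
    exact inv_smul_mem_coneSlice hf (apply_mem_coneGenBy i) hi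
  · rintro - ⟨⟨c, hc, rfl⟩, hf1⟩
    have hfv (i : Fin m) : v i ≠ 0 → 0 < f (v i) := hf _ (apply_mem_coneGenBy i)
    have hterm (i : Fin m) : (c i * f (v i)) • (f (v i))⁻¹ • v i = c i • v i := by
      rcases eq_or_ne (v i) 0 with h | h
      · simp [h]
      · rw [smul_smul, mul_assoc, mul_inv_cancel₀ (hfv i h).ne', mul_one]
    have hw0 (i : Fin m) : 0 ≤ c i * f (v i) := by
      rcases eq_or_ne (v i) 0 with h | h
      · simp [h]
      · exact mul_nonneg (hc i) (hfv i h).le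
    have hw1 : ∑ᶠ i, c i * f (v i) = 1 := by
      simpa [finsum_eq_sum_of_fintype, map_sum] using hf1
    have hmem := (convex_convexHull ℝ ((fun i => (f (v i))⁻¹ • v i) '' {i | v i ≠ 0})).finsum_mem
      hw0 hw1 fun i hi => subset_convexHull ℝ _ ⟨i, fun h => hi (by simp [h]), rfl⟩
    simpa only [hterm, finsum_eq_sum_of_fintype] using hmem

theorem coneSlice_eq_convexHull_extremePoints [TopologicalSpace E] [T2Space E]
    [IsTopologicalAddGroup E] [ContinuousSMul ℝ E] [LocallyConvexSpace ℝ E]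
    (hf : ∀ z ∈ coneGenBy v, z ≠ 0 → 0 < f z) :
    coneSlice v f = convexHull ℝ ((coneSlice v f).extremePoints ℝ) := by
  set T := (fun i => (f (v i))⁻¹ • v i) '' {i | v i ≠ 0}
  have hT : T.Finite := Set.toFinite _
  have hext : ((coneSlice v f).extremePoints ℝ).Finite := by
    rw [coneSlice_eq_convexHull hf]
    exact hT.subset extremePoints_convexHull_subset
  have hcpt : IsCompact (coneSlice v f) := coneSlice_eq_convexHull hf ▸ hT.isCompact_convexHull ℝ
  calc coneSlice v f = closure (convexHull ℝ ((coneSlice v f).extremePoints ℝ)) :=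
        (closure_convexHull_extremePoints hcpt convex_coneSlice).symm
    _ = convexHull ℝ ((coneSlice v f).extremePoints ℝ) := (hext.isClosed_convexHull ℝ).closure_eq

theorem isExtremeRayGen_of_mem_extremePoints {d : ℕ} {v : Fin m → Fin d → ℝ}
    {f : (Fin d → ℝ) →ₗ[ℝ] ℝ} (hf : ∀ z ∈ coneGenBy v, z ≠ 0 → 0 < f z) {p : Fin d → ℝ}
    (hp : p ∈ (coneSlice v f).extremePoints ℝ) : IsExtremeRayGen (coneGenBy v) p := by
  obtain ⟨⟨hpC, hp1⟩, hpext⟩ := mem_extremePoints.1 hp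
  refine ⟨fun h => by simp [h] at hp1, hpC, ?_⟩
  rintro a ha b hb ⟨c, hc, hab⟩
  rcases eq_or_ne a 0 with rfl | ha0
  · exact ⟨⟨0, le_rfl, (zero_smul _ _).symm⟩, ⟨c, hc, by rwa [zero_add] at hab⟩⟩
  rcases eq_or_ne b 0 with rfl | hb0
  · exact ⟨⟨c, hc, by rwa [add_zero] at hab⟩, ⟨0, le_rfl, (zero_smul _ _).symm⟩⟩
  have hfa := hf a ha ha0
  have hfb := hf b hb hb0
  have hfc : f a + f b = c := by simpa [hp1] using congrArg f hab
  have hc0 : 0 < c := hfc ▸ add_pos hfa hfb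
  have hseg : p ∈ openSegment ℝ ((f a)⁻¹ • a) ((f b)⁻¹ • b) := by
    refine ⟨f a / c, f b / c, div_pos hfa hc0, div_pos hfb hc0,
      by rw [← add_div, hfc, div_self hc0.ne'], ?_⟩
    have hw {t : ℝ} (ht : t ≠ 0) : t / c * t⁻¹ = c⁻¹ := by field_simp
    rw [smul_smul, smul_smul, hw hfa.ne', hw hfb.ne', ← smul_add, hab, inv_smul_smul₀ hc0.ne']
  obtain ⟨ha', hb'⟩ := hpext _ (inv_smul_mem_coneSlice hf ha ha0) _
    (inv_smul_mem_coneSlice hf hb hb0) hseg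
  exact ⟨⟨f a, hfa.le, by rw [ha'.symm, smul_inv_smul₀ hfa.ne']⟩,
    ⟨f b, hfb.le, by rw [hb'.symm, smul_inv_smul₀ hfb.ne']⟩⟩

theorem GensDistinctExtremeRays.coneGenBy_eq {d : ℕ} {v : Fin m → Fin d → ℝ}
    {x : Fin n → Fin d → ℝ} (hx : GensDistinctExtremeRays (coneGenBy v) x)
    {f : (Fin d → ℝ) →ₗ[ℝ] ℝ} (hf : ∀ z ∈ coneGenBy v, z ≠ 0 → 0 < f z) :
    coneGenBy v = coneGenBy x := by
  refine (coneGenBy_subset_of_forall_mem fun i => (hx.1 i).2.1).antisymm' fun z hz => ?_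
  rcases eq_or_ne z 0 with rfl | hz0
  · exact zero_mem_coneGenBy_s17
  have hslice : coneSlice v f ⊆ coneGenBy x := by
    rw [coneSlice_eq_convexHull_extremePoints hf]
    refine convexHull_min (fun p hp => ?_) convex_coneGenBy
    obtain ⟨i, c, hc, rfl⟩ := hx.2.2 p (isExtremeRayGen_of_mem_extremePoints hf hp)
    exact smul_mem_coneGenBy_s17 hc.le (apply_mem_coneGenBy i)
  have hfz := hf z hz hz0
  simpa [smul_inv_smul₀ hfz.ne'] using
    smul_mem_coneGenBy_s17 hfz.le (hslice (inv_smul_mem_coneSlice hf hz hz0))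

end Minkowski

def IsSalient {E : Type*} [AddCommGroup E] (S : Set E) : Prop := ∀ u ∈ S, -u ∈ S → u = 0

section EucDual

variable {d m : ℕ} {x : Fin m → Fin d → ℝ}

theorem mem_eucDual_coneGenBy_iff {u : Fin d → ℝ} :
    u ∈ eucDual (coneGenBy x) ↔ ∀ i, 0 ≤ x i ⬝ᵥ u := by
  refine ⟨fun hu i => hu _ (apply_mem_coneGenBy i), ?_⟩
  rintro hu - ⟨c, hc, rfl⟩
  rw [sum_dotProduct]
  exact Finset.sum_nonneg fun i _ => by rw [smul_dotProduct]; exact smul_nonneg (hc i) (hu i)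

theorem surjective_linearCombination_of_isSalient_eucDual
    (h : IsSalient (eucDual (coneGenBy x))) :
    Function.Surjective (Fintype.linearCombination ℝ x) := by
  rw [← LinearMap.range_eq_top, Fintype.range_linearCombination]
  by_contra hne
  obtain ⟨φ, hφ0, hφ⟩ :=
    Submodule.exists_dual_map_eq_bot_of_lt_top (lt_top_iff_ne_top.2 hne) inferInstance
  set u := (dotProductEquiv ℝ (Fin d)).symm φ
  have hxu (i : Fin m) : x i ⬝ᵥ u = 0 := by
    have hmem := Submodule.mem_map_of_mem (f := φ)
      (Submodule.subset_span (Set.mem_range_self (f := x) i))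
    rwa [hφ, Submodule.mem_bot, ← LinearEquiv.apply_symm_apply (dotProductEquiv ℝ (Fin d)) φ,
      dotProductEquiv_apply_apply, dotProduct_comm] at hmem
  have hu : u = 0 := h u (mem_eucDual_coneGenBy_iff.2 fun i => (hxu i).ge)
    (mem_eucDual_coneGenBy_iff.2 fun i => by rw [dotProduct_neg, hxu, neg_zero])
  exact hφ0 ((LinearEquiv.symm_apply_eq _).1 hu ▸ map_zero _)

theorem sum_dotProduct_pos_of_isSalient_eucDual
    (h : IsSalient (eucDual (coneGenBy x))) {u : Fin d → ℝ}
    (hu : u ∈ eucDual (coneGenBy x)) (hu0 : u ≠ 0) : 0 < (∑ i, x i) ⬝ᵥ u := by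
  have hnn := mem_eucDual_coneGenBy_iff.1 hu
  rw [sum_dotProduct]
  refine (Finset.sum_nonneg fun i _ => hnn i).lt_of_ne fun hsum => hu0 (h u hu ?_)
  refine mem_eucDual_coneGenBy_iff.2 fun i => ?_
  rw [dotProduct_neg, (Finset.sum_eq_zero_iff_of_nonneg fun i _ => hnn i).1 hsum.symm i
    (Finset.mem_univ _), neg_zero]

end EucDual

/-- `K` is self-dual for the inner product `⟪z, w⟫ = z ⬝ᵥ P *ᵥ w`. -/
structure IsSelfDualWrt {d : ℕ} (K : Set (Fin d → ℝ)) (P : Matrix (Fin d) (Fin d) ℝ) : Prop where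
  posDef : P.PosDef
  eq_preimage : K = P.mulVec ⁻¹' eucDual K

namespace IsSelfDualWrt

variable {d : ℕ} {K : Set (Fin d → ℝ)} {P : Matrix (Fin d) (Fin d) ℝ}

theorem mem_iff (hK : IsSelfDualWrt K P) {z : Fin d → ℝ} : z ∈ K ↔ P *ᵥ z ∈ eucDual K :=
  Set.ext_iff.1 hK.eq_preimage z

theorem eucDual_eq_image (hK : IsSelfDualWrt K P) : eucDual K = P.mulVecLin '' K := by
  ext w
  obtain ⟨z, rfl⟩ := mulVec_surjective_iff_isUnit.2 hK.posDef.isUnit w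
  rw [← hK.mem_iff, coe_mulVecLin, (mulVec_injective_iff_isUnit.2 hK.posDef.isUnit).mem_set_image]

theorem isSalient_eucDual (hK : IsSelfDualWrt K P) : IsSalient (eucDual K) := by
  intro u hu hnu
  have horth : ∀ w ∈ K, w ⬝ᵥ u = 0 := fun w hw =>
    le_antisymm (by simpa using hnu w hw) (hu w hw)
  obtain ⟨z, rfl⟩ := mulVec_surjective_iff_isUnit.2 hK.posDef.isUnit u
  have hz : z ∈ K := hK.mem_iff.2 fun w hw => (horth w hw).ge
  suffices z = 0 by simp [this]
  by_contra hz0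
  exact (hK.posDef.dotProduct_mulVec_pos hz0).ne' (by simpa using horth z hz)

theorem isSalient (hK : IsSelfDualWrt K P) : IsSalient K := by
  intro z hz hnz
  have hPz : P *ᵥ z = 0 := hK.isSalient_eucDual _ (hK.mem_iff.1 hz)
    (by simpa [mulVec_neg] using hK.mem_iff.1 hnz)
  exact mulVec_injective_iff_isUnit.2 hK.posDef.isUnit (hPz.trans (mulVec_zero P).symm)

theorem eucDual_eucDual (hK : IsSelfDualWrt K P) : eucDual (eucDual K) = K := by
  ext u
  calc u ∈ eucDual (eucDual K) ↔ ∀ z ∈ K, 0 ≤ P *ᵥ z ⬝ᵥ u := by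
        rw [hK.eucDual_eq_image]; exact Set.forall_mem_image
    _ ↔ P *ᵥ u ∈ eucDual K := forall₂_congr fun z _ => by
        rw [dotProduct_mulVec, ← mulVec_transpose, (isHermitian_iff_isSymm.1 hK.posDef.1).eq]
    _ ↔ u ∈ K := hK.mem_iff.symm

theorem eq_coneGenBy_of_gensDistinctExtremeRays (hK : IsSelfDualWrt K P) {m n : ℕ}
    {v : Fin m → Fin d → ℝ} (hKv : K = coneGenBy v) {x y : Fin n → Fin d → ℝ}
    (hx : GensDistinctExtremeRays K x)
    (hy : GensDistinctExtremeRays (eucDual K) y) : K = coneGenBy x ∧ eucDual K = coneGenBy y := by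
  have hKPv : eucDual K = coneGenBy (P.mulVecLin ∘ v) := by
    rw [hK.eucDual_eq_image, hKv, LinearMap.image_coneGenBy]
  set g := dotProductEquiv ℝ (Fin d) (∑ i, v i)
  have hg : ∀ w ∈ eucDual K, w ≠ 0 → 0 < g w := by
    rw [hKv] at hK ⊢
    exact fun w hw hw0 => sum_dotProduct_pos_of_isSalient_eucDual hK.isSalient_eucDual hw hw0
  constructor
  · rw [hKv] at hx ⊢
    refine hx.coneGenBy_eq (f := g ∘ₗ P.mulVecLin) fun z hz hz0 => hg _ ?_ ?_
    · exact hK.mem_iff.1 (hKv ▸ hz)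
    · exact (mulVec_injective_iff_isUnit.2 hK.posDef.isUnit).ne hz0 |>.trans_eq (mulVec_zero P)
  · rw [hKPv] at hy ⊢
    exact hy.coneGenBy_eq fun w hw hw0 => hg w (hKPv ▸ hw) hw0

end IsSelfDualWrt

theorem LinearMap.exists_injective_comp_eq_of_ker_eq {R M N Q : Type*} [Ring R]
    [AddCommGroup M] [Module R M] [AddCommGroup N] [Module R N] [AddCommGroup Q] [Module R Q]
    {f : M →ₗ[R] N} {g : M →ₗ[R] Q} (hf : Function.Surjective f) (hfg : ker f = ker g) :
    ∃ φ : N →ₗ[R] Q, Function.Injective φ ∧ φ ∘ₗ f = g := by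
  let e : N ≃ₗ[R] range g := (f.quotKerEquivOfSurjective hf).symm.trans
    ((Submodule.quotEquivOfEq _ _ hfg).trans g.quotKerEquivRange)
  refine ⟨(range g).subtype ∘ₗ e.toLinearMap, Subtype.val_injective.comp e.injective, ?_⟩
  ext a
  simp [e]

section TraceFactorization

variable {V : Type*} [AddCommGroup V] [Module ℝ V] {d k : ℕ}

/-- The slack factorization `S i j = x i ⬝ᵥ y j` and the Gram representation
`S i j = ⟨A i, A j⟩`, read as one identity of bilinear forms on coefficient vectors. -/
def IsTraceFactorization (X Y : V →ₗ[ℝ] Fin d → ℝ) (A : V →ₗ[ℝ] Matrix (Fin k) (Fin k) ℝ) :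
    Prop :=
  ∀ a b, X a ⬝ᵥ Y b = (A a * A b).trace

namespace IsTraceFactorization

variable {X Y : V →ₗ[ℝ] Fin d → ℝ} {A : V →ₗ[ℝ] Matrix (Fin k) (Fin k) ℝ}

theorem ker_left_le (h : IsTraceFactorization X Y A) (hA : ∀ a, (A a).IsSymm) :
    LinearMap.ker X ≤ LinearMap.ker A := by
  intro a ha
  have htr := h a a
  rw [LinearMap.mem_ker.1 ha, zero_dotProduct] at htr
  have hAa : (A a)ᴴ = A a := (conjTranspose_eq_transpose_of_trivial _).trans (hA a).eq
  exact trace_conjTranspose_mul_self_eq_zero_iff.1 (by rw [hAa, ← htr])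

theorem ker_le_right (h : IsTraceFactorization X Y A) (hX : Function.Surjective X) :
    LinearMap.ker A ≤ LinearMap.ker Y := by
  intro a ha
  obtain ⟨b, hb⟩ := hX (Y a)
  have htr := h b a
  rw [LinearMap.mem_ker.1 ha, mul_zero, trace_zero, hb] at htr
  exact dotProduct_self_eq_zero.1 htr

theorem ker_right_le_left (h : IsTraceFactorization X Y A) (hY : Function.Surjective Y) :
    LinearMap.ker Y ≤ LinearMap.ker X := by
  intro a ha
  obtain ⟨b, hb⟩ := hY (X a)
  have htr := h a b
  rw [trace_mul_comm, ← h b a, LinearMap.mem_ker.1 ha, dotProduct_zero, hb] at htr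
  exact dotProduct_self_eq_zero.1 htr

theorem ker_left_eq (h : IsTraceFactorization X Y A) (hA : ∀ a, (A a).IsSymm)
    (hX : Function.Surjective X) (hY : Function.Surjective Y) :
    LinearMap.ker X = LinearMap.ker A :=
  (h.ker_left_le hA).antisymm ((h.ker_le_right hX).trans (h.ker_right_le_left hY))

theorem ker_right_le (h : IsTraceFactorization X Y A) (hA : ∀ a, (A a).IsSymm)
    (hY : Function.Surjective Y) : LinearMap.ker Y ≤ LinearMap.ker A :=
  (h.ker_right_le_left hY).trans (h.ker_left_le hA)

end IsTraceFactorization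

theorem isTraceFactorization_linearCombination {n : ℕ} {x y : Fin n → Fin d → ℝ}
    {A : Fin n → Matrix (Fin k) (Fin k) ℝ} (h : ∀ i j, x i ⬝ᵥ y j = (A i * A j).trace) :
    IsTraceFactorization (Fintype.linearCombination ℝ x) (Fintype.linearCombination ℝ y)
      (Fintype.linearCombination ℝ A) := by
  intro a b
  simp only [Fintype.linearCombination_apply, sum_dotProduct, dotProduct_sum, smul_dotProduct,
    dotProduct_smul, Finset.sum_mul, Finset.mul_sum, smul_mul_smul, trace_sum, trace_smul, h,
    Finset.smul_sum, smul_smul, mul_comm]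

end TraceFactorization

theorem posSemidef_of_mem_coneGenBy {m : Type*} {n : ℕ} {A : Fin n → Matrix m m ℝ}
    (hA : ∀ i, (A i).PosSemidef) {Z : Matrix m m ℝ} (hZ : Z ∈ coneGenBy A) : Z.PosSemidef := by
  obtain ⟨c, hc, rfl⟩ := hZ
  exact posSemidef_sum _ fun i _ => (hA i).smul (hc i)

open scoped MatrixOrder in
theorem trace_mul_nonneg_of_posSemidef {m : Type*} [Fintype m] {A B : Matrix m m ℝ}
    (hA : A.PosSemidef) (hB : B.PosSemidef) : 0 ≤ (A * B).trace := by
  classical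
  set R := CFC.sqrt B
  have hR : Rᴴ = R := (CFC.sqrt_nonneg B).posSemidef.1
  calc 0 ≤ (Rᴴ * A * R).trace := (hA.conjTranspose_mul_mul_same R).trace_nonneg
    _ = (A * B).trace := by
      rw [hR, Matrix.mul_assoc, trace_mul_comm, Matrix.mul_assoc,
        CFC.sqrt_mul_sqrt_self B hB.nonneg]

theorem isSymm_linearCombination {m : Type*} {n : ℕ} {A : Fin n → Matrix m m ℝ}
    (hA : ∀ i, (A i).IsSymm) (c : Fin n → ℝ) : (Fintype.linearCombination ℝ A c).IsSymm := by
  rw [Fintype.linearCombination_apply]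
  exact Finset.sum_induction _ IsSymm (fun _ _ => IsSymm.add) isSymm_zero
    fun i _ => (hA i).smul _

theorem coneGenBy_subset_posSemidef_inter_span {m : Type*} {n : ℕ} {A : Fin n → Matrix m m ℝ}
    (hA : ∀ i, (A i).PosSemidef) :
    coneGenBy A ⊆ {Y | Y.PosSemidef} ∩ Submodule.span ℝ (Set.range A) :=
  fun _ hY => ⟨posSemidef_of_mem_coneGenBy hA hY, coneGenBy_subset_span hY⟩

theorem posSemidef_inter_span_subset {m : Type*} [Fintype m] {n : ℕ} {A : Fin n → Matrix m m ℝ}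
    (hA : ∀ i, (A i).PosSemidef) :
    {Y | Y.PosSemidef} ∩ (Submodule.span ℝ (Set.range A) : Set (Matrix m m ℝ)) ⊆
      {Y | Y.IsSymm ∧ ∀ Z ∈ coneGenBy A, 0 ≤ (Z * Y).trace} ∩ Submodule.span ℝ (Set.range A) :=
  fun _ ⟨hY, hYH⟩ => ⟨⟨isHermitian_iff_isSymm.1 hY.1, fun _ hZ =>
    trace_mul_nonneg_of_posSemidef (posSemidef_of_mem_coneGenBy hA hZ) hY⟩, hYH⟩

theorem mem_coneGenBy_of_trace_mul_nonneg {n d k : ℕ} {x y : Fin n → Fin d → ℝ}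
    {A : Fin n → Matrix (Fin k) (Fin k) ℝ}
    (hT : IsTraceFactorization (Fintype.linearCombination ℝ x) (Fintype.linearCombination ℝ y)
      (Fintype.linearCombination ℝ A))
    (hxy : eucDual (coneGenBy x) = coneGenBy y)
    (hker : LinearMap.ker (Fintype.linearCombination ℝ y) ≤
      LinearMap.ker (Fintype.linearCombination ℝ A))
    {Z : Matrix (Fin k) (Fin k) ℝ} (hZ : Z ∈ Submodule.span ℝ (Set.range A))
    (hnn : ∀ i, 0 ≤ (A i * Z).trace) : Z ∈ coneGenBy A := by
  rw [← Fintype.range_linearCombination] at hZ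
  obtain ⟨c, rfl⟩ := hZ
  have hyc : Fintype.linearCombination ℝ y c ∈ coneGenBy y := by
    refine hxy ▸ mem_eucDual_coneGenBy_iff.2 fun i => ?_
    have hi := hT (Pi.single i 1) c
    simp only [Fintype.linearCombination_apply_single, one_smul] at hi
    exact hi ▸ hnn i
  obtain ⟨μ, hμ, hyμ⟩ := hyc
  have hcμ : c - μ ∈ LinearMap.ker (Fintype.linearCombination ℝ y) := by
    rw [LinearMap.mem_ker, map_sub, hyμ, Fintype.linearCombination_apply, sub_self]
  have hAcμ := LinearMap.mem_ker.1 (hker hcμ)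
  rw [map_sub, sub_eq_zero] at hAcμ
  exact ⟨μ, hμ, by rw [hAcμ, Fintype.linearCombination_apply]⟩

theorem cpsd_psd_slack_gives_selfDual_psd_slice_general
    {d n k : ℕ} (K : Set (Fin d → ℝ))
    (hpoly : IsPolyhedralCone K)
    (hsd : ∃ P : Matrix (Fin d) (Fin d) ℝ, P.PosDef ∧
        K = {y : Fin d → ℝ | ∀ x ∈ K, 0 ≤ x ⬝ᵥ P.mulVec y})
    (S : Matrix (Fin n) (Fin n) ℝ) (hslack : IsSlackMatrix S K)
    (A : Fin n → Matrix (Fin k) (Fin k) ℝ) (hApsd : ∀ i, (A i).PosSemidef)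
    (hgram : ∀ i j, S i j = (A i * A j).trace) :
    (∃ φ : (Fin d → ℝ) →ₗ[ℝ] Matrix (Fin k) (Fin k) ℝ,
        Function.Injective φ ∧ φ '' K = coneGenBy A) ∧
    coneGenBy A
      = {Y : Matrix (Fin k) (Fin k) ℝ | Y.IsSymm ∧ ∀ Z ∈ coneGenBy A, 0 ≤ (Z * Y).trace}
          ∩ (Submodule.span ℝ (Set.range A) : Set (Matrix (Fin k) (Fin k) ℝ)) ∧
    coneGenBy A
      = {Y : Matrix (Fin k) (Fin k) ℝ | Y.PosSemidef}
          ∩ (Submodule.span ℝ (Set.range A) : Set (Matrix (Fin k) (Fin k) ℝ)) := by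
  obtain ⟨P, hP, hKP⟩ := hsd
  have hK : IsSelfDualWrt K P := ⟨hP, hKP⟩
  obtain ⟨m, v, hKv⟩ := hpoly
  obtain ⟨x, y, hx, hy, hSxy⟩ := hslack
  obtain ⟨hKx, hKy⟩ := hK.eq_coneGenBy_of_gensDistinctExtremeRays hKv hx hy
  have hXsurj := surjective_linearCombination_of_isSalient_eucDual (hKx ▸ hK.isSalient_eucDual)
  have hYsurj := surjective_linearCombination_of_isSalient_eucDual
    (by rw [← hKy, hK.eucDual_eucDual]; exact hK.isSalient)
  have hT := isTraceFactorization_linearCombination fun i j => (hSxy i j).symm.trans (hgram i j)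
  have hsymm := isSymm_linearCombination fun i => isHermitian_iff_isSymm.1 (hApsd i).1
  obtain ⟨Φ, hΦ, hΦx⟩ :=
    LinearMap.exists_injective_comp_eq_of_ker_eq hXsurj (hT.ker_left_eq hsymm hXsurj hYsurj)
  have hcone := coneGenBy_subset_posSemidef_inter_span hApsd
  have hpsd := posSemidef_inter_span_subset hApsd
  have hdual : {Y | Y.IsSymm ∧ ∀ Z ∈ coneGenBy A, 0 ≤ (Z * Y).trace} ∩
      (Submodule.span ℝ (Set.range A) : Set _) ⊆ coneGenBy A :=
    fun Y ⟨⟨_, hY⟩, hYH⟩ => mem_coneGenBy_of_trace_mul_nonneg hT (hKx ▸ hKy)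
      (hT.ker_right_le hsymm hYsurj) hYH fun i => hY _ (apply_mem_coneGenBy i)
  refine ⟨⟨Φ, hΦ, ?_⟩, (hcone.trans hpsd).antisymm hdual, hcone.antisymm (hpsd.trans hdual)⟩
  rw [hKx, LinearMap.image_coneGenBy_of_comp_eq hΦx]

/-- Let `S` be a PSD slack matrix of a self-dual polyhedral cone
`K ⊆ ℝ^d`, and suppose `S` is completely positive semidefinite, witnessed by PSD
matrices `A 1, …, A n` with `S i j = ⟨A i, A j⟩` (Frobenius inner product). Let `K̄` be
the convex cone generated by the `A i` and `H` their span. Then `K̄` is linearly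
isomorphic to `K`, `K̄` is self-dual on its span with respect to the Frobenius inner
product, and `K̄ = PSD^k ∩ H`. -/
theorem cpsd_psd_slack_gives_selfDual_psd_slice
    {d n k : ℕ} (K : Set (Fin d → ℝ))
    (hpoly : IsPolyhedralCone K)
    (hsd : ∃ P : Matrix (Fin d) (Fin d) ℝ, P.PosDef ∧
        K = {y : Fin d → ℝ | ∀ x ∈ K, 0 ≤ x ⬝ᵥ P.mulVec y})
    (S : Matrix (Fin n) (Fin n) ℝ) (hslack : IsSlackMatrix S K)
    (hpsd : S.PosSemidef)
    (A : Fin n → Matrix (Fin k) (Fin k) ℝ) (hApsd : ∀ i, (A i).PosSemidef)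
    (hgram : ∀ i j, S i j = (A i * A j).trace) :
    (∃ φ : (Fin d → ℝ) →ₗ[ℝ] Matrix (Fin k) (Fin k) ℝ,
        Function.Injective φ ∧ φ '' K = coneGenBy A) ∧
    coneGenBy A
      = {Y : Matrix (Fin k) (Fin k) ℝ | Y.IsSymm ∧ ∀ Z ∈ coneGenBy A, 0 ≤ (Z * Y).trace}
          ∩ (Submodule.span ℝ (Set.range A) : Set (Matrix (Fin k) (Fin k) ℝ)) ∧
    coneGenBy A
      = {Y : Matrix (Fin k) (Fin k) ℝ | Y.PosSemidef}
          ∩ (Submodule.span ℝ (Set.range A) : Set (Matrix (Fin k) (Fin k) ℝ)) :=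
  cpsd_psd_slack_gives_selfDual_psd_slice_general K hpoly hsd S hslack A hApsd hgram
end
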